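/- arXiv:0901.2715 — 3 statements merged into one kernel-verified Lean document; each statement's English description precedes it below -/
import Mathlib

section
/- Let f : ℝ^d → ℝ be measurable and let 1 ≤ c < C ≤ ∞ be such that ∫_{ℝ^d} |f(x)|^q dx < ∞ for every q ∈ (c,C). Then the function q ↦ ∫_{ℝ^d} |f(x)|^q dx is infinitely differentiable on (c,C), and for every positive integer k its k-th derivative at q ∈ (c,C) equals ∫_{ℝ^d} |f(x)|^q (log |f(x)|)^k dx, where the integrand is interpreted as 0 at points where f(x) = 0. -/
open MeasureTheory Real ENNReal

-- key pointwise bound: t^q |log t|^k ≤ K (t^a + t^b) for q ∈ [a',b'] ⊂ (a,b)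
lemma aux_key_pow_log {k : ℕ} {ε : ℝ} (hε : 0 < ε) {s : ℝ} (hs : 1 ≤ s) :
    |Real.log s| ^ k ≤ ((k : ℝ) / ε) ^ k * s ^ ε := by
  rcases Nat.eq_zero_or_pos k with hk | hk
  · subst hk
    simpa using Real.one_le_rpow hs hε.le
  · have hk' : (0:ℝ) < k := by exact_mod_cast hk
    have h1 : |Real.log s| = Real.log s := abs_of_nonneg (Real.log_nonneg hs)
    have h2 : Real.log s ≤ s ^ (ε / k) / (ε / k) :=
      Real.log_le_rpow_div (by linarith) (by positivity)
    have h3 : |Real.log s| ^ k ≤ (s ^ (ε / k) / (ε / k)) ^ k := by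
      rw [h1]
      exact pow_le_pow_left₀ (Real.log_nonneg hs) h2 k
    refine h3.trans_eq ?_
    rw [div_pow, ← Real.rpow_natCast (s ^ (ε / k)) k, ← Real.rpow_mul (by linarith)]
    have : ε / k * k = ε := by field_simp
    rw [this, div_eq_mul_inv, ← inv_pow, inv_div, mul_comm]

lemma aux_bound (k : ℕ) {a a' b' b : ℝ} (ha : 0 < a) (haa : a < a') (hbb : b' < b) :
    ∃ K : ℝ, 0 ≤ K ∧ ∀ t : ℝ, 0 ≤ t → ∀ q : ℝ, a' ≤ q → q ≤ b' →
      t ^ q * |Real.log t| ^ k ≤ K * (t ^ a + t ^ b) := by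
  set ε := min (a' - a) (b - b') with hεdef
  have hε : 0 < ε := lt_min (by linarith) (by linarith)
  refine ⟨((k : ℝ) / ε) ^ k, by positivity, fun t ht q hq1 hq2 => ?_⟩
  have hK : (0:ℝ) ≤ ((k : ℝ) / ε) ^ k := by positivity
  rcases ht.lt_or_eq with h | h
  swap
  · rw [← h, Real.zero_rpow (by linarith : (0:ℝ) ≠ q).symm,
      Real.zero_rpow ha.ne', Real.zero_rpow (by linarith : (0:ℝ) ≠ b).symm]
    simp
  rcases le_or_gt 1 t with h1 | h1
  · have key := aux_key_pow_log (k := k) hε h1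
    have ht' : (0:ℝ) ≤ t ^ q := (Real.rpow_nonneg ht q)
    calc t ^ q * |Real.log t| ^ k
        ≤ t ^ q * (((k : ℝ) / ε) ^ k * t ^ ε) :=
          mul_le_mul_of_nonneg_left key ht'
      _ = ((k : ℝ) / ε) ^ k * (t ^ q * t ^ ε) := by ring
      _ = ((k : ℝ) / ε) ^ k * t ^ (q + ε) := by rw [← Real.rpow_add h]
      _ ≤ ((k : ℝ) / ε) ^ k * t ^ b := by
          refine mul_le_mul_of_nonneg_left ?_ hK
          refine Real.rpow_le_rpow_of_exponent_le h1 ?_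
          have : ε ≤ b - b' := min_le_right _ _
          linarith
      _ ≤ ((k : ℝ) / ε) ^ k * (t ^ a + t ^ b) := by
          refine mul_le_mul_of_nonneg_left ?_ hK
          have : (0:ℝ) ≤ t ^ a := Real.rpow_nonneg ht a
          linarith
  · have hs : 1 ≤ t⁻¹ := (one_le_inv_iff₀).2 ⟨h, h1.le⟩
    have key := aux_key_pow_log (k := k) hε hs
    rw [Real.log_inv, abs_neg] at key
    rw [Real.inv_rpow ht ε] at key
    have key2 : |Real.log t| ^ k ≤ ((k : ℝ) / ε) ^ k * t ^ (-ε) := by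
      rwa [Real.rpow_neg ht]
    have ht' : (0:ℝ) ≤ t ^ q := Real.rpow_nonneg ht q
    calc t ^ q * |Real.log t| ^ k
        ≤ t ^ q * (((k : ℝ) / ε) ^ k * t ^ (-ε)) :=
          mul_le_mul_of_nonneg_left key2 ht'
      _ = ((k : ℝ) / ε) ^ k * (t ^ q * t ^ (-ε)) := by ring
      _ = ((k : ℝ) / ε) ^ k * t ^ (q - ε) := by
          rw [← Real.rpow_add h]; ring_nf
      _ ≤ ((k : ℝ) / ε) ^ k * t ^ a := by
          refine mul_le_mul_of_nonneg_left ?_ hK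
          refine Real.rpow_le_rpow_of_exponent_ge h h1.le ?_
          have : ε ≤ a' - a := min_le_left _ _
          linarith
      _ ≤ ((k : ℝ) / ε) ^ k * (t ^ a + t ^ b) := by
          refine mul_le_mul_of_nonneg_left ?_ hK
          have : (0:ℝ) ≤ t ^ b := Real.rpow_nonneg ht b
          linarith

-- derivative of q ↦ t^q * (log t)^k for t ≥ 0, q > 0
lemma aux_hasDerivAt {t : ℝ} (ht : 0 ≤ t) (k : ℕ) {q : ℝ} (hq : 0 < q) :
    HasDerivAt (fun p : ℝ => t ^ p * Real.log t ^ k)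
      (t ^ q * Real.log t ^ (k + 1)) q := by
  rcases ht.lt_or_eq with h | h
  · have h1 := ((Real.hasStrictDerivAt_const_rpow h q).hasDerivAt).mul_const
      (Real.log t ^ k)
    rw [show t ^ q * Real.log t ^ (k + 1) = t ^ q * Real.log t * Real.log t ^ k by ring]
    exact h1
  · have heq : (fun p : ℝ => t ^ p * Real.log t ^ k) =ᶠ[nhds q] fun _ => 0 := by
      filter_upwards [isOpen_Ioi.mem_nhds hq] with p hp
      rw [← h, Real.zero_rpow (ne_of_gt hp), zero_mul]
    have : t ^ q * Real.log t ^ (k + 1) = 0 := by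
      rw [← h, Real.log_zero, zero_pow (Nat.succ_ne_zero k), mul_zero]
    rw [this]
    exact (hasDerivAt_const q (0:ℝ)).congr_of_eventuallyEq heq

lemma aux_integrable {α : Type*} [MeasurableSpace α] {μ : Measure α} {g : α → ℝ}
    (hg : Measurable g) (hg0 : ∀ x, 0 ≤ g x) {a b q : ℝ} (ha : 0 < a) (haq : a < q)
    (hqb : q < b) (hia : Integrable (fun x => g x ^ a) μ)
    (hib : Integrable (fun x => g x ^ b) μ) (k : ℕ) :
    Integrable (fun x => g x ^ q * Real.log (g x) ^ k) μ := by
  obtain ⟨K, hK0, hK⟩ := aux_bound k ha haq hqb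
  have hmeas : Measurable (fun x => g x ^ q * Real.log (g x) ^ k) :=
    (hg.pow measurable_const).mul ((hg.log).pow measurable_const)
  refine (((hia.add hib).const_mul K).mono' hmeas.aestronglyMeasurable ?_)
  refine Filter.Eventually.of_forall fun x => ?_
  have h1 : ‖g x ^ q * Real.log (g x) ^ k‖ ≤ g x ^ q * |Real.log (g x)| ^ k := by
    rw [norm_mul, Real.norm_eq_abs, Real.norm_eq_abs,
      abs_of_nonneg (Real.rpow_nonneg (hg0 x) q), abs_pow]
  exact h1.trans (hK (g x) (hg0 x) q le_rfl le_rfl)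

open Metric in
lemma aux_main {α : Type*} [MeasurableSpace α] {μ : Measure α} {g : α → ℝ}
    (hg : Measurable g) (hg0 : ∀ x, 0 ≤ g x) {a b q₀ : ℝ} (ha : 0 < a) (haq : a < q₀)
    (hqb : q₀ < b) (hia : Integrable (fun x => g x ^ a) μ)
    (hib : Integrable (fun x => g x ^ b) μ) (k : ℕ) :
    HasDerivAt (fun q : ℝ => ∫ x, g x ^ q * Real.log (g x) ^ k ∂μ)
      (∫ x, g x ^ q₀ * Real.log (g x) ^ (k + 1) ∂μ) q₀ := by
  set a' : ℝ := (a + q₀) / 2 with ha'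
  set b' : ℝ := (q₀ + b) / 2 with hb'
  have ha'1 : a < a' := by rw [ha']; linarith
  have ha'2 : a' < q₀ := by rw [ha']; linarith
  have hb'1 : q₀ < b' := by rw [hb']; linarith
  have hb'2 : b' < b := by rw [hb']; linarith
  obtain ⟨K, hK0, hK⟩ := aux_bound (k + 1) ha ha'1 hb'2
  set ε : ℝ := min (q₀ - a') (b' - q₀) with hεdef
  have hε : 0 < ε := lt_min (by linarith) (by linarith)
  have hball : ∀ q ∈ ball q₀ ε, a' ≤ q ∧ q ≤ b' := by
    intro q hq
    rw [mem_ball, Real.dist_eq, abs_sub_lt_iff] at hq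
    constructor
    · have := min_le_left (q₀ - a') (b' - q₀); rw [← hεdef] at this; linarith
    · have := min_le_right (q₀ - a') (b' - q₀); rw [← hεdef] at this; linarith
  have hmeas : ∀ q : ℝ, ∀ j : ℕ,
      AEStronglyMeasurable (fun x => g x ^ q * Real.log (g x) ^ j) μ :=
    fun q j => ((hg.pow measurable_const).mul
      ((hg.log).pow measurable_const)).aestronglyMeasurable
  have := hasDerivAt_integral_of_dominated_loc_of_deriv_le (μ := μ)
    (F := fun q x => g x ^ q * Real.log (g x) ^ k)
    (F' := fun q x => g x ^ q * Real.log (g x) ^ (k + 1))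
    (x₀ := q₀) (bound := fun x => K * (g x ^ a + g x ^ b)) (ball_mem_nhds q₀ hε)
    (Filter.Eventually.of_forall fun q => hmeas q k)
    (aux_integrable hg hg0 ha haq hqb hia hib k)
    (hmeas q₀ (k + 1))
    ?_ ((hia.add hib).const_mul K) ?_
  · exact this.2
  · refine Filter.Eventually.of_forall fun x => fun q hq => ?_
    obtain ⟨h1, h2⟩ := hball q hq
    have hle : ‖g x ^ q * Real.log (g x) ^ (k + 1)‖
        ≤ g x ^ q * |Real.log (g x)| ^ (k + 1) := by
      rw [norm_mul, Real.norm_eq_abs, Real.norm_eq_abs,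
        abs_of_nonneg (Real.rpow_nonneg (hg0 x) q), abs_pow]
    exact hle.trans (hK (g x) (hg0 x) q h1 h2)
  · refine Filter.Eventually.of_forall fun x => fun q hq => ?_
    obtain ⟨h1, h2⟩ := hball q hq
    exact aux_hasDerivAt (hg0 x) k (by linarith)

open Metric in
lemma aux_complex {α : Type*} [MeasurableSpace α] {μ : Measure α} {g : α → ℝ}
    (hg : Measurable g) (hg0 : ∀ x, 0 ≤ g x) {a b : ℝ} {z₀ : ℂ} (ha : 0 < a)
    (haq : a < z₀.re) (hqb : z₀.re < b) (hia : Integrable (fun x => g x ^ a) μ)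
    (hib : Integrable (fun x => g x ^ b) μ) :
    HasDerivAt (fun z : ℂ => ∫ x, (g x : ℂ) ^ z ∂μ)
      (∫ x, (g x : ℂ) ^ z₀ * Complex.log (g x) ∂μ) z₀ := by
  set a' : ℝ := (a + z₀.re) / 2 with ha'
  set b' : ℝ := (z₀.re + b) / 2 with hb'
  have ha'1 : a < a' := by rw [ha']; linarith
  have ha'2 : a' < z₀.re := by rw [ha']; linarith
  have hb'1 : z₀.re < b' := by rw [hb']; linarith
  have hb'2 : b' < b := by rw [hb']; linarith
  obtain ⟨K, hK0, hK⟩ := aux_bound 1 ha ha'1 hb'2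
  set ε : ℝ := min (z₀.re - a') (b' - z₀.re) with hεdef
  have hε : 0 < ε := lt_min (by linarith) (by linarith)
  have hball : ∀ z ∈ ball z₀ ε, a' ≤ z.re ∧ z.re ≤ b' := by
    intro z hz
    rw [mem_ball] at hz
    have h1 : |(z - z₀).re| ≤ ‖z - z₀‖ := Complex.abs_re_le_norm _
    have h2 : ‖z - z₀‖ < ε := by rwa [Complex.dist_eq] at hz
    have h3 : |z.re - z₀.re| < ε :=
      lt_of_le_of_lt (by simpa [Complex.sub_re] using h1) h2
    rw [abs_sub_lt_iff] at h3
    have e1 := min_le_left (z₀.re - a') (b' - z₀.re)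
    have e2 := min_le_right (z₀.re - a') (b' - z₀.re)
    rw [← hεdef] at e1 e2
    exact ⟨by linarith [h3.2], by linarith [h3.1]⟩
  have hnorm : ∀ (x : α) (z : ℂ), 0 < z.re → ‖(g x : ℂ) ^ z‖ = g x ^ z.re := by
    intro x z hz
    rcases (hg0 x).lt_or_eq with h | h
    · rw [Complex.norm_cpow_eq_rpow_re_of_pos h]
    · rw [← h, Complex.ofReal_zero, Complex.zero_cpow (fun hzz => by
        rw [hzz] at hz; simp at hz), norm_zero, Real.zero_rpow hz.ne']
  have hmeas : ∀ z : ℂ, AEStronglyMeasurable (fun x => (g x : ℂ) ^ z) μ :=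
    fun z => ((Complex.measurable_ofReal.comp hg).pow
      measurable_const).aestronglyMeasurable
  have hmeas' : AEStronglyMeasurable
      (fun x => (g x : ℂ) ^ z₀ * Complex.log (g x)) μ :=
    (((Complex.measurable_ofReal.comp hg).pow measurable_const).mul
      (Complex.measurable_ofReal.comp hg).clog).aestronglyMeasurable
  have hint0 : Integrable (fun x => (g x : ℂ) ^ z₀) μ := by
    refine ((hia.add hib).mono' (hmeas z₀) (Filter.Eventually.of_forall fun x => ?_))
    rw [hnorm x z₀ (by linarith)]
    have ha0 : (0:ℝ) ≤ g x ^ a := Real.rpow_nonneg (hg0 x) a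
    have hb0 : (0:ℝ) ≤ g x ^ b := Real.rpow_nonneg (hg0 x) b
    rcases (hg0 x).lt_or_eq with hgx | hgx
    · rcases le_or_gt 1 (g x) with h | h
      · have : g x ^ z₀.re ≤ g x ^ b :=
          Real.rpow_le_rpow_of_exponent_le h (by linarith)
        simp only [Pi.add_apply]; linarith
      · have : g x ^ z₀.re ≤ g x ^ a :=
          Real.rpow_le_rpow_of_exponent_ge hgx h.le (by linarith)
        simp only [Pi.add_apply]; linarith
    · rw [← hgx, Real.zero_rpow (by linarith : z₀.re ≠ 0)]
      simp only [Pi.add_apply]; linarith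
  have := hasDerivAt_integral_of_dominated_loc_of_deriv_le (μ := μ)
    (F := fun (z : ℂ) x => (g x : ℂ) ^ z)
    (F' := fun (z : ℂ) x => (g x : ℂ) ^ z * Complex.log (g x))
    (x₀ := z₀) (bound := fun x => K * (g x ^ a + g x ^ b)) (ball_mem_nhds z₀ hε)
    (Filter.Eventually.of_forall hmeas) hint0 hmeas'
    ?_ ((hia.add hib).const_mul K) ?_
  · exact this.2
  · refine Filter.Eventually.of_forall fun x => fun z hz => ?_
    obtain ⟨h1, h2⟩ := hball z hz
    have hzre : 0 < z.re := by linarith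
    rw [norm_mul, hnorm x z hzre]
    rcases (hg0 x).lt_or_eq with h | h
    · rw [← Complex.ofReal_log (hg0 x), Complex.norm_real, Real.norm_eq_abs]
      have := hK (g x) (hg0 x) z.re h1 h2
      rwa [pow_one] at this
    · rw [← h, Real.zero_rpow hzre.ne', zero_mul]
      positivity
  · refine Filter.Eventually.of_forall fun x => fun z hz => ?_
    obtain ⟨h1, h2⟩ := hball z hz
    have hzre : 0 < z.re := by linarith
    have hz0 : z ≠ 0 := fun hzz => by rw [hzz] at hzre; simp at hzre
    rcases (hg0 x).lt_or_eq with h | h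
    · have hne : (g x : ℂ) ≠ 0 := by
        simp only [ne_eq, Complex.ofReal_eq_zero]; exact h.ne'
      exact (Complex.hasStrictDerivAt_const_cpow (Or.inl hne)).hasDerivAt
    · have heq : (fun w : ℂ => (g x : ℂ) ^ w) =ᶠ[nhds z] fun _ => 0 := by
        filter_upwards [isOpen_compl_singleton.mem_nhds hz0] with w hw
        rw [← h, Complex.ofReal_zero, Complex.zero_cpow hw]
      convert (hasDerivAt_const z (0:ℂ)).congr_of_eventuallyEq heq using 1
      show (g x : ℂ) ^ z * Complex.log (g x) = 0
      rw [← h, Complex.ofReal_zero, Complex.zero_cpow hz0, zero_mul]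

/-- If all moments `∫ |f|^q dx` are finite for `q` in an interval `(c,C)`
(with `1 ≤ c < C ≤ ∞`), then `q ↦ ∫ |f|^q dx` is infinitely differentiable there
and its `k`-th derivative equals `∫ |f|^q (log |f|)^k dx` (the integrand being `0`
where `f` vanishes, which is automatic since `0^q = 0` and `log 0 = 0`). -/
theorem moment_function_derivatives (d : ℕ) (hd : 1 ≤ d)
    (f : EuclideanSpace ℝ (Fin d) → ℝ) (hf : Measurable f)
    (c : ℝ) (C : ℝ≥0∞) (hc : 1 ≤ c) (hcC : ENNReal.ofReal c < C)
    (hint : ∀ q ∈ {q : ℝ | c < q ∧ ENNReal.ofReal q < C},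
      Integrable (fun x => |f x| ^ q) volume) :
    ContDiffOn ℝ (⊤ : ℕ∞) (fun q : ℝ => ∫ x, |f x| ^ q)
        {q : ℝ | c < q ∧ ENNReal.ofReal q < C} ∧
      ∀ k : ℕ, 0 < k → ∀ q ∈ {q : ℝ | c < q ∧ ENNReal.ofReal q < C},
        iteratedDerivWithin k (fun q : ℝ => ∫ x, |f x| ^ q)
            {q : ℝ | c < q ∧ ENNReal.ofReal q < C} q
          = ∫ x, |f x| ^ q * Real.log |f x| ^ k := by
  set S := {q : ℝ | c < q ∧ ENNReal.ofReal q < C} with hSdef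
  have hopen : IsOpen S := by
    have hSeq : S = Set.Ioi c ∩ ENNReal.ofReal ⁻¹' Set.Iio C := by
      ext q
      simp [hSdef, Set.mem_setOf_eq, Set.mem_Ioi, Set.mem_Iio]
    rw [hSeq]
    exact isOpen_Ioi.inter (isOpen_Iio.preimage ENNReal.continuous_ofReal)
  have hab : ∀ q ∈ S, ∃ a b : ℝ, a ∈ S ∧ b ∈ S ∧ 0 < a ∧ a < q ∧ q < b := by
    intro q hq
    obtain ⟨hq1, hq2⟩ := hq
    have hq0 : 0 < q := by linarith
    obtain ⟨r, hr0, hr1, hr2⟩ := ENNReal.lt_iff_exists_real_btwn.mp hq2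
    have hqr : q < r := by
      rwa [ENNReal.ofReal_lt_ofReal_iff_of_nonneg hq0.le] at hr1
    refine ⟨(c + q) / 2, r, ⟨by linarith, ?_⟩, ⟨by linarith, hr2⟩, by linarith,
      by linarith, hqr⟩
    calc ENNReal.ofReal ((c + q) / 2) ≤ ENNReal.ofReal q :=
          ENNReal.ofReal_le_ofReal (by linarith)
      _ < C := hq2
  have hg : Measurable fun x => |f x| := hf.abs
  have hg0 : ∀ x, (0:ℝ) ≤ |f x| := fun x => abs_nonneg _
  have hderiv : ∀ (k : ℕ), ∀ q ∈ S,
      HasDerivAt (fun p : ℝ => ∫ x, |f x| ^ p * Real.log |f x| ^ k)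
        (∫ x, |f x| ^ q * Real.log |f x| ^ (k + 1)) q := by
    intro k q hq
    obtain ⟨a, b, haS, hbS, ha0, haq, hqb⟩ := hab q hq
    exact aux_main hg hg0 ha0 haq hqb (hint a haS) (hint b hbS) k
  have hfun0 : (fun q : ℝ => ∫ x, |f x| ^ q)
      = fun p : ℝ => ∫ x, |f x| ^ p * Real.log |f x| ^ 0 := by
    funext p; simp
  have hdw : ∀ (k : ℕ), ∀ q ∈ S,
      derivWithin (fun p : ℝ => ∫ x, |f x| ^ p * Real.log |f x| ^ k) S q
        = ∫ x, |f x| ^ q * Real.log |f x| ^ (k + 1) := by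
    intro k q hq
    rw [derivWithin_of_isOpen hopen hq]
    exact (hderiv k q hq).deriv
  refine ⟨?_, ?_⟩
  · -- analyticity via complex extension
    set T : Set ℂ := Complex.re ⁻¹' S with hTdef
    have hTopen : IsOpen T := hopen.preimage Complex.continuous_re
    have hdiffC : DifferentiableOn ℂ (fun z : ℂ => ∫ x, ((|f x| : ℝ) : ℂ) ^ z) T := by
      intro z hz
      obtain ⟨a, b, haS, hbS, ha0, haq, hqb⟩ := hab z.re hz
      exact (aux_complex hg hg0 ha0 haq hqb (hint a haS)
        (hint b hbS)).differentiableAt.differentiableWithinAt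
    have hA : AnalyticOnNhd ℝ (fun z : ℂ => ∫ x, ((|f x| : ℝ) : ℂ) ^ z) T :=
      (hdiffC.analyticOnNhd hTopen).restrictScalars
    have hcomp : AnalyticOnNhd ℝ
        ((fun z : ℂ => ∫ x, ((|f x| : ℝ) : ℂ) ^ z) ∘ fun q : ℝ => (q : ℂ)) S := by
      refine hA.comp ?_ ?_
      · exact fun q _ => Complex.ofRealCLM.analyticAt q
      · intro q hq
        simpa [hTdef] using hq
    have hre : AnalyticOnNhd ℝ
        (Complex.reCLM ∘ ((fun z : ℂ => ∫ x, ((|f x| : ℝ) : ℂ) ^ z) ∘ fun q : ℝ => (q : ℂ)))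
        S := Complex.reCLM.comp_analyticOnNhd hcomp
    have heq : Set.EqOn
        (Complex.reCLM ∘ ((fun z : ℂ => ∫ x, ((|f x| : ℝ) : ℂ) ^ z) ∘ fun q : ℝ => (q : ℂ)))
        (fun q : ℝ => ∫ x, |f x| ^ q) S := by
      intro q _
      have h1 : (∫ x, ((|f x| : ℝ) : ℂ) ^ (q : ℂ)) = ((∫ x, |f x| ^ q : ℝ) : ℂ) := by
        rw [show ((∫ x, |f x| ^ q : ℝ) : ℂ)
            = ∫ x, ((|f x| ^ q : ℝ) : ℂ) from (integral_ofReal).symm]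
        refine integral_congr_ae (Filter.Eventually.of_forall fun x => ?_)
        exact (Complex.ofReal_cpow (hg0 x) q).symm
      simp only [Function.comp_apply, h1, Complex.reCLM_apply, Complex.ofReal_re]
    exact (hre.congr hopen heq).contDiffOn hopen.uniqueDiffOn
  · -- iterated derivatives
    have hiter : ∀ (k : ℕ), ∀ q ∈ S,
        iteratedDerivWithin k (fun q : ℝ => ∫ x, |f x| ^ q) S q
          = ∫ x, |f x| ^ q * Real.log |f x| ^ k := by
      intro k
      induction k with
      | zero =>
        intro q hq
        rw [iteratedDerivWithin_zero]
        simp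
      | succ n ih =>
        intro q hq
        rw [iteratedDerivWithin_succ]
        rw [derivWithin_congr ih (ih q hq)]
        exact hdw n q hq
    intro k _ q hq
    exact hiter k q hq
end

section
/- (Lower bound for the parabolic Strichartz functional.) Let 1 < a < b ≤ ∞ and ν ∈ Ψ(a,b). Then liminf_{t→∞} sup_{f ∈ L¹(ℝ^d), f ≠ 0} [ t^{d/2} · ‖T_t f‖_{G(ν)} / ( |f|_1 · sup_{r∈(a,b)} t^{d/(2r)}/ν(r) ) ] > 0. In other words, the Strichartz parabolic two-space functional W_{SP}(L¹, G(ν); t) = sup_{f≠0} [ (‖T_t f‖_{G(ν)}/φ(G(ν), t^{d/2})) : (|f|_1/φ(L¹, t^{d/2})) ], where φ(L¹,δ) = δ and φ(G(ν),δ) = sup_{r∈(a,b)} δ^{1/r}/ν(r) are the fundamental functions, stays bounded away from 0 as t → ∞. -/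
open MeasureTheory Real ENNReal Filter

/-- The heat propagator `T_t` on `ℝ^d`. -/
noncomputable def heatProp (d : ℕ) (t : ℝ) (f : EuclideanSpace ℝ (Fin d) → ℝ) :
    EuclideanSpace ℝ (Fin d) → ℝ :=
  fun x => (2 * Real.pi * t) ^ (-(d : ℝ) / 2) *
    ∫ y : EuclideanSpace ℝ (Fin d), Real.exp (-‖x - y‖ ^ 2 / (2 * t)) * f y

/-- The interval `(a,b)` of exponents, where `b` may be `∞`. -/
def glSet (a : ℝ) (b : ℝ≥0∞) : Set ℝ := {p : ℝ | a < p ∧ ENNReal.ofReal p < b}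

/-- The Grand Lebesgue norm `‖f‖_{G(ψ)} = sup_{p ∈ S} |f|_p / ψ(p)`, in `[0,∞]`. -/
noncomputable def glNorm (d : ℕ) (S : Set ℝ) (ψ : ℝ → ℝ)
    (f : EuclideanSpace ℝ (Fin d) → ℝ) : ℝ≥0∞ :=
  ⨆ p ∈ S, eLpNorm f (ENNReal.ofReal p) volume / ENNReal.ofReal (ψ p)

section Aux

variable (d : ℕ)

lemma heatProp_indicator_eq {t : ℝ} (ht : 0 < t) (x : EuclideanSpace ℝ (Fin d)) :
    heatProp d t ((Metric.ball (0 : EuclideanSpace ℝ (Fin d)) 1).indicator fun _ => (1:ℝ)) x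
      = (2 * Real.pi * t) ^ (-(d : ℝ) / 2) *
        ∫ y in Metric.ball (0 : EuclideanSpace ℝ (Fin d)) 1, Real.exp (-‖x - y‖ ^ 2 / (2 * t)) := by
  unfold heatProp
  congr 1
  rw [← integral_indicator measurableSet_ball]
  congr 1
  funext y
  by_cases h : y ∈ Metric.ball (0 : EuclideanSpace ℝ (Fin d)) 1 <;>
    simp [Set.indicator_of_mem, Set.indicator_of_notMem, h]

lemma heatProp_indicator_nonneg {t : ℝ} (ht : 0 < t) (x : EuclideanSpace ℝ (Fin d)) :
    0 ≤ heatProp d t ((Metric.ball (0 : EuclideanSpace ℝ (Fin d)) 1).indicator fun _ => (1:ℝ)) x := by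
  rw [heatProp_indicator_eq d ht x]
  apply mul_nonneg
  · apply Real.rpow_nonneg
    positivity
  · apply integral_nonneg
    intro y
    positivity

lemma heatProp_indicator_ge {t : ℝ} (ht : 1 ≤ t) {x : EuclideanSpace ℝ (Fin d)}
    (hx : x ∈ Metric.ball (0 : EuclideanSpace ℝ (Fin d)) (Real.sqrt t)) :
    (2 * Real.pi * t) ^ (-(d : ℝ) / 2) *
        ((volume (Metric.ball (0 : EuclideanSpace ℝ (Fin d)) 1)).toReal * Real.exp (-2))
      ≤ heatProp d t ((Metric.ball (0 : EuclideanSpace ℝ (Fin d)) 1).indicator fun _ => (1:ℝ)) x := by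
  have ht0 : (0:ℝ) < t := lt_of_lt_of_le one_pos ht
  rw [heatProp_indicator_eq d ht0 x]
  have hC : (0:ℝ) ≤ (2 * Real.pi * t) ^ (-(d : ℝ) / 2) := by
    apply Real.rpow_nonneg; positivity
  apply mul_le_mul_of_nonneg_left _ hC
  have hmono : ∀ y ∈ Metric.ball (0 : EuclideanSpace ℝ (Fin d)) 1,
      Real.exp (-2) ≤ Real.exp (-‖x - y‖ ^ 2 / (2 * t)) := by
    intro y hy
    apply Real.exp_le_exp.2
    have hxn : ‖x‖ < Real.sqrt t := by simpa [mem_ball_zero_iff] using hx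
    have hyn : ‖y‖ < 1 := by simpa [mem_ball_zero_iff] using hy
    have hst : (1:ℝ) ≤ Real.sqrt t := by
      rw [show (1:ℝ) = Real.sqrt 1 by simp]
      exact Real.sqrt_le_sqrt ht
    have hxy : ‖x - y‖ ≤ 2 * Real.sqrt t := by
      calc ‖x - y‖ ≤ ‖x‖ + ‖y‖ := norm_sub_le _ _
        _ ≤ Real.sqrt t + 1 := by linarith
        _ ≤ 2 * Real.sqrt t := by linarith
    have hsq : ‖x - y‖ ^ 2 ≤ 4 * t := by
      have h2 : ‖x - y‖ ^ 2 ≤ (2 * Real.sqrt t) ^ 2 :=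
        pow_le_pow_left₀ (norm_nonneg _) hxy 2
      have h3 : (2 * Real.sqrt t) ^ 2 = 4 * t := by
        rw [mul_pow, Real.sq_sqrt ht0.le]; norm_num
      linarith
    rw [neg_div, neg_le_neg_iff, div_le_iff₀ (by positivity)]
    linarith
  have hint : IntegrableOn (fun y : EuclideanSpace ℝ (Fin d) => Real.exp (-‖x - y‖ ^ 2 / (2 * t)))
      (Metric.ball 0 1) volume := by
    apply Measure.integrableOn_of_bounded (M := 1) measure_ball_lt_top.ne
    · apply Continuous.aestronglyMeasurable; fun_prop
    · filter_upwards with y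
      rw [Real.norm_of_nonneg (Real.exp_nonneg _)]
      apply Real.exp_le_one_iff.2
      apply div_nonpos_of_nonpos_of_nonneg (neg_nonpos.2 (by positivity)) (by positivity)
  calc (volume (Metric.ball (0 : EuclideanSpace ℝ (Fin d)) 1)).toReal * Real.exp (-2)
      = ∫ _ in Metric.ball (0 : EuclideanSpace ℝ (Fin d)) 1, Real.exp (-2) := by
        rw [setIntegral_const, smul_eq_mul]; rfl
    _ ≤ ∫ y in Metric.ball (0 : EuclideanSpace ℝ (Fin d)) 1, Real.exp (-‖x - y‖ ^ 2 / (2 * t)) :=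
        setIntegral_mono_on (integrableOn_const measure_ball_lt_top.ne) hint
          measurableSet_ball hmono

lemma real_key (d : ℕ) {t k r νr : ℝ} (ht : 1 ≤ t) (hk : 0 < k) (hr : 1 < r) (hν : 0 < νr) :
    ((2 * Real.pi) ^ (-(d : ℝ) / 2) * Real.exp (-2) * min k 1) * k * (t ^ ((d : ℝ) / (2 * r)) / νr)
      ≤ t ^ ((d : ℝ) / 2) *
        ((2 * Real.pi * t) ^ (-(d : ℝ) / 2) * (k * Real.exp (-2)) * (t ^ ((d : ℝ) / 2) * k) ^ (1 / r) / νr) := by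
  have ht0 : (0:ℝ) < t := lt_of_lt_of_le one_pos ht
  have h2π : (0:ℝ) < 2 * Real.pi := by positivity
  have hr0 : (0:ℝ) < r := lt_trans one_pos hr
  have e1 : (2 * Real.pi * t) ^ (-(d : ℝ) / 2)
      = (2 * Real.pi) ^ (-(d : ℝ) / 2) * t ^ (-(d : ℝ) / 2) :=
    Real.mul_rpow h2π.le ht0.le
  have e2 : (t ^ ((d : ℝ) / 2) * k) ^ (1 / r) = t ^ ((d : ℝ) / (2 * r)) * k ^ (1 / r) := by
    rw [Real.mul_rpow (Real.rpow_nonneg ht0.le _) hk.le, ← Real.rpow_mul ht0.le,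
      show (d : ℝ) / 2 * (1 / r) = (d : ℝ) / (2 * r) by ring]
  have e3 : t ^ ((d : ℝ) / 2) * t ^ (-(d : ℝ) / 2) = 1 := by
    rw [← Real.rpow_add ht0, show (d : ℝ) / 2 + -(d : ℝ) / 2 = 0 by ring, Real.rpow_zero]
  rw [e1, e2]
  have e4 : t ^ ((d : ℝ) / 2) *
      ((2 * Real.pi) ^ (-(d : ℝ) / 2) * t ^ (-(d : ℝ) / 2) * (k * Real.exp (-2)) *
        (t ^ ((d : ℝ) / (2 * r)) * k ^ (1 / r)) / νr)
      = ((2 * Real.pi) ^ (-(d : ℝ) / 2) * Real.exp (-2) * k ^ (1 / r)) * k *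
          (t ^ ((d : ℝ) / (2 * r)) / νr) := by
    calc t ^ ((d : ℝ) / 2) *
        ((2 * Real.pi) ^ (-(d : ℝ) / 2) * t ^ (-(d : ℝ) / 2) * (k * Real.exp (-2)) *
          (t ^ ((d : ℝ) / (2 * r)) * k ^ (1 / r)) / νr)
        = (t ^ ((d : ℝ) / 2) * t ^ (-(d : ℝ) / 2)) *
            (((2 * Real.pi) ^ (-(d : ℝ) / 2) * Real.exp (-2) * k ^ (1 / r)) * k *
              (t ^ ((d : ℝ) / (2 * r)) / νr)) := by ring
      _ = _ := by rw [e3, one_mul]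
  rw [e4]
  have hmin : min k 1 ≤ k ^ (1 / r) := by
    have h1r : 1 / r ≤ 1 := by rw [div_le_one hr0]; linarith
    rcases le_total k 1 with h | h
    · calc min k 1 = k := min_eq_left h
        _ = k ^ (1:ℝ) := (Real.rpow_one k).symm
        _ ≤ k ^ (1 / r) := Real.rpow_le_rpow_of_exponent_ge hk h h1r
    · calc min k 1 = 1 := min_eq_right h
        _ = k ^ (0:ℝ) := (Real.rpow_zero k).symm
        _ ≤ k ^ (1 / r) := Real.rpow_le_rpow_of_exponent_le h (by positivity)
  apply mul_le_mul_of_nonneg_right _ (by positivity)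
  apply mul_le_mul_of_nonneg_right _ hk.le
  apply mul_le_mul_of_nonneg_left hmin
  positivity

end Aux

/-- Lower bound for the parabolic Strichartz functional `W_{SP}(L¹, G(ν); t)`:
the liminf as `t → ∞` of
`sup_{f ∈ L¹, f ≠ 0} t^{d/2} ‖T_t f‖_{G(ν)} / (|f|_1 · sup_{r∈(a,b)} t^{d/(2r)}/ν(r))`
is strictly positive. -/
theorem parabolic_strichartz_lower_bound (d : ℕ) (hd : 1 ≤ d)
    (a : ℝ) (b : ℝ≥0∞) (ha : 1 < a) (hab : ENNReal.ofReal a < b)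
    (ν : ℝ → ℝ) (hν_cont : ContinuousOn ν (glSet a b))
    (hν_pos : ∀ p ∈ glSet a b, 0 < ν p)
    (hν_inf : ∃ ε : ℝ, 0 < ε ∧ ∀ p ∈ glSet a b, ε ≤ ν p) :
    0 < Filter.liminf (fun t : ℝ =>
        ⨆ (f : EuclideanSpace ℝ (Fin d) → ℝ)
          (_ : Integrable f volume ∧ eLpNorm f 1 volume ≠ 0),
          ENNReal.ofReal (t ^ ((d : ℝ) / 2)) * glNorm d (glSet a b) ν (heatProp d t f)
            / (eLpNorm f 1 volume
                * ⨆ r ∈ glSet a b, ENNReal.ofReal (t ^ ((d : ℝ) / (2 * r)) / ν r)))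
      Filter.atTop := by
  obtain ⟨ε, hε, hνε⟩ := hν_inf
  haveI : Nonempty (Fin d) := ⟨⟨0, hd⟩⟩
  haveI : Nontrivial (EuclideanSpace ℝ (Fin d)) := inferInstance
  set B : Set (EuclideanSpace ℝ (Fin d)) := Metric.ball 0 1 with hB
  set κ : ℝ≥0∞ := volume B with hκ
  have hκ0 : κ ≠ 0 := (Metric.measure_ball_pos volume 0 one_pos).ne'
  have hκt : κ ≠ ⊤ := measure_ball_lt_top.ne
  set k : ℝ := κ.toReal with hkdef
  have hk : 0 < k := ENNReal.toReal_pos hκ0 hκt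
  have hκk : κ = ENNReal.ofReal k := (ENNReal.ofReal_toReal hκt).symm
  -- an exponent in glSet
  obtain ⟨r₀, hr₀0, hr₀1, hr₀2⟩ := ENNReal.lt_iff_exists_real_btwn.1 hab
  have hr₀a : a < r₀ := by
    by_contra h
    exact absurd (ENNReal.ofReal_le_ofReal (not_lt.1 h)) hr₀1.not_ge
  have hr₀ : r₀ ∈ glSet a b := ⟨hr₀a, hr₀2⟩
  -- the constant
  set c' : ℝ := (2 * Real.pi) ^ (-(d : ℝ) / 2) * Real.exp (-2) * min k 1 with hc'def
  have hc' : 0 < c' := by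
    apply mul_pos (mul_pos _ (Real.exp_pos _)) (lt_min hk one_pos)
    apply Real.rpow_pos_of_pos; positivity
  apply lt_of_lt_of_le (show (0:ℝ≥0∞) < ENNReal.ofReal c' from ENNReal.ofReal_pos.2 hc')
  refine Filter.le_liminf_of_le (by isBoundedDefault) ?_
  filter_upwards [eventually_ge_atTop (1:ℝ)] with t ht
  have ht0 : (0:ℝ) < t := lt_of_lt_of_le one_pos ht
  -- the test function
  set f₀ : EuclideanSpace ℝ (Fin d) → ℝ := B.indicator (fun _ => (1:ℝ)) with hf₀def
  have hf₀int : Integrable f₀ volume :=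
    (integrable_indicator_iff measurableSet_ball).2 (integrableOn_const measure_ball_lt_top.ne)
  have hf₀1 : eLpNorm f₀ 1 volume = κ := by
    rw [hf₀def, eLpNorm_indicator_const measurableSet_ball one_ne_zero one_ne_top]
    simp
    rfl
  refine le_iSup_of_le f₀ ?_
  refine le_iSup_of_le ⟨hf₀int, by rw [hf₀1]; exact hκ0⟩ ?_
  rw [hf₀1]
  set S : ℝ≥0∞ := ⨆ r ∈ glSet a b, ENNReal.ofReal (t ^ ((d : ℝ) / (2 * r)) / ν r) with hSdef
  have hSle : S ≤ ENNReal.ofReal (t ^ ((d : ℝ) / (2 * a)) / ε) := by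
    apply iSup₂_le
    intro r hr
    apply ENNReal.ofReal_le_ofReal
    have hra : a < r := hr.1
    have hexp : (d : ℝ) / (2 * r) ≤ (d : ℝ) / (2 * a) := by
      apply div_le_div_of_nonneg_left (by positivity) (by positivity)
      linarith
    exact div_le_div₀ (Real.rpow_nonneg ht0.le _)
      (Real.rpow_le_rpow_of_exponent_le ht hexp) hε (hνε r hr)
  have hSt : S ≠ ⊤ := ne_top_of_le_ne_top ENNReal.ofReal_ne_top hSle
  have hS0 : S ≠ 0 := by
    have hle : ENNReal.ofReal (t ^ ((d : ℝ) / (2 * r₀)) / ν r₀) ≤ S :=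
      le_biSup (fun p => ENNReal.ofReal (t ^ ((d:ℝ) / (2 * p)) / ν p)) hr₀
    have : (0:ℝ≥0∞) < ENNReal.ofReal (t ^ ((d : ℝ) / (2 * r₀)) / ν r₀) :=
      ENNReal.ofReal_pos.2 (div_pos (Real.rpow_pos_of_pos ht0 _) (hν_pos r₀ hr₀))
    exact (lt_of_lt_of_le this hle).ne'
  rw [ENNReal.le_div_iff_mul_le (Or.inl (mul_ne_zero hκ0 hS0))
    (Or.inl (ENNReal.mul_ne_top hκt hSt))]
  rw [← mul_assoc, hSdef]
  simp only [ENNReal.mul_iSup]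
  apply iSup₂_le
  intro r hr
  have hra : a < r := hr.1
  have hr1 : 1 < r := lt_trans ha hra
  have hνr : 0 < ν r := hν_pos r hr
  -- lower bound on the eLpNorm of the heat propagator
  set m : ℝ := (2 * Real.pi * t) ^ (-(d : ℝ) / 2) * (k * Real.exp (-2)) with hmdef
  have hm : 0 ≤ m := by
    apply mul_nonneg (Real.rpow_nonneg (by positivity) _) (by positivity)
  have hvol : volume (Metric.ball (0 : EuclideanSpace ℝ (Fin d)) (Real.sqrt t))
      = ENNReal.ofReal (t ^ ((d : ℝ) / 2) * k) := by
    rw [Measure.addHaar_ball volume 0 (Real.sqrt_nonneg t)]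
    have hfr : Module.finrank ℝ (EuclideanSpace ℝ (Fin d)) = d := by simp
    rw [hfr]
    have hsq : Real.sqrt t ^ d = t ^ ((d : ℝ) / 2) := by
      rw [Real.sqrt_eq_rpow, ← Real.rpow_natCast (t ^ ((1:ℝ)/2)) d, ← Real.rpow_mul ht0.le]
      congr 1
      ring
    rw [hsq, ← hB, ← hκ, hκk, ← ENNReal.ofReal_mul (Real.rpow_nonneg ht0.le _)]
  have hlow : ENNReal.ofReal (m * (t ^ ((d : ℝ) / 2) * k) ^ (1 / r))
      ≤ eLpNorm (heatProp d t f₀) (ENNReal.ofReal r) volume := by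
    have hmono : ∀ x, ‖(Metric.ball (0 : EuclideanSpace ℝ (Fin d)) (Real.sqrt t)).indicator
        (fun _ => m) x‖ ≤ ‖heatProp d t f₀ x‖ := by
      intro x
      by_cases hx : x ∈ Metric.ball (0 : EuclideanSpace ℝ (Fin d)) (Real.sqrt t)
      · rw [Set.indicator_of_mem hx, Real.norm_of_nonneg hm,
          Real.norm_of_nonneg (heatProp_indicator_nonneg d ht0 x)]
        exact heatProp_indicator_ge d ht hx
      · rw [Set.indicator_of_notMem hx]
        simp
    have h := eLpNorm_mono (p := ENNReal.ofReal r) (μ := volume) hmono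
    rw [eLpNorm_indicator_const measurableSet_ball
      ((ENNReal.ofReal_pos.2 (by linarith : (0:ℝ) < r)).ne') ENNReal.ofReal_ne_top] at h
    rw [hvol, ENNReal.toReal_ofReal (by linarith : (0:ℝ) ≤ r),
      ENNReal.ofReal_rpow_of_pos (by positivity),
      Real.enorm_eq_ofReal hm,
      ← ENNReal.ofReal_mul hm] at h
    exact h
  have hgl : eLpNorm (heatProp d t f₀) (ENNReal.ofReal r) volume / ENNReal.ofReal (ν r)
      ≤ glNorm d (glSet a b) ν (heatProp d t f₀) := by
    simp only [glNorm]
    exact le_biSup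
      (fun p => eLpNorm (heatProp d t f₀) (ENNReal.ofReal p) volume / ENNReal.ofReal (ν p)) hr
  calc ENNReal.ofReal c' * κ * ENNReal.ofReal (t ^ ((d : ℝ) / (2 * r)) / ν r)
      = ENNReal.ofReal (c' * k * (t ^ ((d : ℝ) / (2 * r)) / ν r)) := by
        rw [hκk, ← ENNReal.ofReal_mul hc'.le,
          ← ENNReal.ofReal_mul (mul_nonneg hc'.le hk.le)]
    _ ≤ ENNReal.ofReal (t ^ ((d : ℝ) / 2) *
          (m * (t ^ ((d : ℝ) / 2) * k) ^ (1 / r) / ν r)) := by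
        apply ENNReal.ofReal_le_ofReal
        simp only [hc'def, hmdef]
        exact real_key d ht hk hr1 hνr
    _ = ENNReal.ofReal (t ^ ((d : ℝ) / 2)) *
          (ENNReal.ofReal (m * (t ^ ((d : ℝ) / 2) * k) ^ (1 / r)) / ENNReal.ofReal (ν r)) := by
        rw [ENNReal.ofReal_mul (Real.rpow_nonneg ht0.le _), ENNReal.ofReal_div_of_pos hνr]
    _ ≤ ENNReal.ofReal (t ^ ((d : ℝ) / 2)) *
          (eLpNorm (heatProp d t f₀) (ENNReal.ofReal r) volume / ENNReal.ofReal (ν r)) :=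
        mul_le_mul_right (ENNReal.div_le_div_right hlow _) _
    _ ≤ ENNReal.ofReal (t ^ ((d : ℝ) / 2)) * glNorm d (glSet a b) ν (heatProp d t f₀) :=
        mul_le_mul_right hgl _
end

section
/- (Strichartz parabolic pair of Grand Lebesgue spaces.) Let 1 ≤ a₁ < b₁ ≤ a₂ < b₂ ≤ ∞, let ψ ∈ Ψ(a₁,b₁) and ν ∈ Ψ(a₂,b₂). Then there is a finite constant C = C(d, ψ, ν) such that for every t > 2 and every measurable f : ℝ^d → ℝ (with values in [0,∞] where infinite): ‖T_t f‖_{G(ν)} · ( sup_{p∈(a₁,b₁)} t^{d/(2p)}/ψ(p) ) ≤ C · ‖f‖_{G(ψ)} · ( sup_{r∈(a₂,b₂)} t^{d/(2r)}/ν(r) ). (The two suprema are the fundamental functions φ(G(ψ), t^{d/2}) and φ(G(ν), t^{d/2}).) -/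
open MeasureTheory Real ENNReal

section Aux

variable {d : ℕ}

local notation "E" => EuclideanSpace ℝ (Fin d)

lemma lintegral_comp_sub (g : E → ℝ≥0∞) (hg : Measurable g) (x : E) :
    ∫⁻ y, g (x - y) = ∫⁻ y, g y := by
  have h1 : ∫⁻ y : E, g (x + y) = ∫⁻ y, g y := lintegral_add_left_eq_self g x
  have h2 : ∫⁻ y : E, g (x + (-y)) = ∫⁻ y : E, g (x + y) :=
    ((Measure.measurePreserving_neg (volume : Measure E)).lintegral_comp
      (hg.comp (measurable_const.add measurable_id)))
  simp_rw [sub_eq_add_neg]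
  exact h2.trans h1

lemma young_conv (K F : E → ℝ≥0∞) (hK : Measurable K) (hF : Measurable F)
    (p q r : ℝ) (hp1 : 1 < p) (hq1 : 1 < q) (hr1 : 1 < r) (hpr : p < r) (hqr : q < r)
    (hpqr : 1/p + 1/q = 1 + 1/r) :
    (∫⁻ x, (∫⁻ y, K (x - y) * F y) ^ r) ^ (1/r) ≤
      (∫⁻ z, K z ^ q) ^ (1/q) * (∫⁻ y, F y ^ p) ^ (1/p) := by
  have hp0 : (0:ℝ) < p := by linarith
  have hq0 : (0:ℝ) < q := by linarith
  have hr0 : (0:ℝ) < r := by linarith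
  set s : ℝ := (1/q - 1/r)⁻¹ with hs_def
  set u : ℝ := (1/p - 1/r)⁻¹ with hu_def
  have hqr' : 0 < 1/q - 1/r := by
    have := one_div_lt_one_div_of_lt hq0 hqr; linarith
  have hpr' : 0 < 1/p - 1/r := by
    have := one_div_lt_one_div_of_lt hp0 hpr; linarith
  have hs0 : 0 < s := inv_pos.mpr hqr'
  have hu0 : 0 < u := inv_pos.mpr hpr'
  have hs_inv : 1/s = 1/q - 1/r := by rw [hs_def, one_div, inv_inv]
  have hu_inv : 1/u = 1/p - 1/r := by rw [hu_def, one_div, inv_inv]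
  set r' : ℝ := r.conjExponent with hr'_def
  have hconj : r.HolderConjugate r' := Real.HolderConjugate.conjExponent hr1
  have hrr' : 1/r + 1/r' = 1 := by
    rw [one_div, one_div]; exact hconj.inv_add_inv_eq_one
  have hr'_inv : 1/r' = 1/s + 1/u := by rw [hs_inv, hu_inv]; linarith
  have hr'0 : 0 < r' := hconj.symm.pos
  have hr's : r' < s := by
    refine lt_of_one_div_lt_one_div hs0 ?_
    rw [hs_inv, hr'_inv]
    have := one_div_pos.mpr hu0
    linarith
  set Iq : ℝ≥0∞ := ∫⁻ z, K z ^ q with hIq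
  set Ip : ℝ≥0∞ := ∫⁻ y, F y ^ p with hIp
  -- pointwise Hölder bound for inner integral
  have key : ∀ x : E, (∫⁻ y, K (x - y) * F y) ≤
      (∫⁻ y, K (x - y) ^ q * F y ^ p) ^ (1/r) * (Iq ^ (1/s) * Ip ^ (1/u)) := by
    intro x
    have hKx : Measurable (fun y : E => K (x - y)) :=
      hK.comp (measurable_const.sub measurable_id)
    set A : E → ℝ≥0∞ := fun y => (K (x - y) ^ q * F y ^ p) ^ (1/r) with hA
    set B : E → ℝ≥0∞ := fun y => K (x - y) ^ (q/s) with hB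
    set C : E → ℝ≥0∞ := fun y => F y ^ (p/u) with hC
    have hmA : Measurable A := ((hKx.pow_const q).mul (hF.pow_const p)).pow_const _
    have hmB : Measurable B := hKx.pow_const _
    have hmC : Measurable C := hF.pow_const _
    have hsplit : ∀ y, K (x - y) * F y = A y * (B y * C y) := by
      intro y
      rw [hA, hB, hC]
      simp only []
      rw [ENNReal.mul_rpow_of_nonneg _ _ (by positivity : (0:ℝ) ≤ 1/r),
        ← ENNReal.rpow_mul, ← ENNReal.rpow_mul]
      rw [mul_mul_mul_comm, ← ENNReal.rpow_add_of_nonneg _ _ (by positivity) (by positivity),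
        ← ENNReal.rpow_add_of_nonneg _ _ (by positivity) (by positivity)]
      rw [show q * (1/r) + q/s = 1 by
            rw [div_eq_mul_one_div q s, hs_inv]; field_simp; ring,
          show p * (1/r) + p/u = 1 by
            rw [div_eq_mul_one_div p u, hu_inv]; field_simp; ring,
          ENNReal.rpow_one, ENNReal.rpow_one]
    calc (∫⁻ y, K (x - y) * F y) = ∫⁻ y, (A * (B * C)) y := by
          simp only [Pi.mul_apply]; exact lintegral_congr hsplit
      _ ≤ (∫⁻ y, A y ^ r) ^ (1/r) * (∫⁻ y, (B * C) y ^ r') ^ (1/r') :=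
          ENNReal.lintegral_mul_le_Lp_mul_Lq volume hconj hmA.aemeasurable
            (hmB.mul hmC).aemeasurable
      _ ≤ (∫⁻ y, A y ^ r) ^ (1/r) *
            ((∫⁻ y, B y ^ s) ^ (1/s) * (∫⁻ y, C y ^ u) ^ (1/u)) := by
          gcongr
          exact lintegral_Lp_mul_le_Lq_mul_Lr hr'0 hr's hr'_inv volume
            hmB.aemeasurable hmC.aemeasurable
      _ = (∫⁻ y, K (x - y) ^ q * F y ^ p) ^ (1/r) * (Iq ^ (1/s) * Ip ^ (1/u)) := by
          congr 1
          · congr 1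
            refine lintegral_congr fun y => ?_
            rw [hA]
            simp only []
            rw [← ENNReal.rpow_mul, one_div, inv_mul_cancel₀ (ne_of_gt hr0), ENNReal.rpow_one]
          congr 1
          · rw [hIq, ← lintegral_comp_sub (fun z => K z ^ q) (hK.pow_const q) x]
            refine congrArg (fun X => X ^ (1/s)) ?_
            refine lintegral_congr fun y => ?_
            rw [hB]
            simp only []
            rw [← ENNReal.rpow_mul, div_mul_cancel₀ _ (ne_of_gt hs0)]
          · rw [hIp]
            refine congrArg (fun X => X ^ (1/u)) ?_
            refine lintegral_congr fun y => ?_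
            rw [hC]
            simp only []
            rw [← ENNReal.rpow_mul, div_mul_cancel₀ _ (ne_of_gt hu0)]
  have hGmeas : Measurable fun x : E => ∫⁻ y, K (x - y) ^ q * F y ^ p :=
    Measurable.lintegral_prod_right'
      (f := fun (z : E × E) => K (z.1 - z.2) ^ q * F z.2 ^ p)
      (((hK.comp (measurable_fst.sub measurable_snd)).pow_const q).mul
        ((hF.comp measurable_snd).pow_const p))
  have swap : (∫⁻ x, ∫⁻ y, K (x - y) ^ q * F y ^ p) = Iq * Ip := by
    rw [lintegral_lintegral_swap]
    · have h : ∀ y : E, (∫⁻ x, K (x - y) ^ q * F y ^ p) = Iq * F y ^ p := by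
        intro y
        have hm : Measurable fun x : E => K (x - y) ^ q :=
          (hK.comp (measurable_id.sub measurable_const)).pow_const q
        rw [lintegral_mul_const (F y ^ p) hm]
        congr 1
        exact lintegral_sub_right_eq_self (fun z => K z ^ q) y
      simp_rw [h]
      rw [lintegral_const_mul _ (hF.pow_const p)]
    · exact (((hK.comp (measurable_fst.sub measurable_snd)).pow_const q).mul
        ((hF.comp measurable_snd).pow_const p)).aemeasurable
  have eqpow : ∀ (X : ℝ≥0∞) (a : ℝ), 0 ≤ a → X * X ^ a = X ^ (1 + a) := fun X a ha => by
    rw [ENNReal.rpow_add_of_nonneg 1 a zero_le_one ha, ENNReal.rpow_one]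
  calc (∫⁻ x, (∫⁻ y, K (x - y) * F y) ^ r) ^ (1/r)
      ≤ (∫⁻ x, ((∫⁻ y, K (x - y) ^ q * F y ^ p) ^ (1/r) * (Iq ^ (1/s) * Ip ^ (1/u))) ^ r) ^ (1/r) := by
        gcongr with x
        exact key x
    _ = ((Iq * Ip) * (Iq ^ (1/s) * Ip ^ (1/u)) ^ r) ^ (1/r) := by
        have hpt : ∀ x : E, ((∫⁻ y, K (x - y) ^ q * F y ^ p) ^ (1/r) * (Iq ^ (1/s) * Ip ^ (1/u))) ^ r
            = (∫⁻ y, K (x - y) ^ q * F y ^ p) * (Iq ^ (1/s) * Ip ^ (1/u)) ^ r := fun x => by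
          rw [ENNReal.mul_rpow_of_nonneg _ _ hr0.le, ← ENNReal.rpow_mul,
            one_div, inv_mul_cancel₀ (ne_of_gt hr0), ENNReal.rpow_one]
        simp_rw [hpt]
        rw [lintegral_mul_const _ hGmeas, swap]
    _ = (Iq ^ (1 + 1/s * r) * Ip ^ (1 + 1/u * r)) ^ (1/r) := by
        rw [ENNReal.mul_rpow_of_nonneg (Iq ^ (1/s)) _ hr0.le, ← ENNReal.rpow_mul,
          ← ENNReal.rpow_mul, mul_mul_mul_comm, eqpow _ _ (by positivity),
          eqpow _ _ (by positivity)]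
    _ = Iq ^ ((1 + 1/s * r) * (1/r)) * Ip ^ ((1 + 1/u * r) * (1/r)) := by
        rw [ENNReal.mul_rpow_of_nonneg _ _ (by positivity), ← ENNReal.rpow_mul,
          ← ENNReal.rpow_mul]
    _ = Iq ^ (1/q) * Ip ^ (1/p) := by
        congr 1
        · refine congrArg (fun a => Iq ^ a) ?_
          rw [hs_inv]; field_simp; ring
        · refine congrArg (fun a => Ip ^ a) ?_
          rw [hu_inv]; field_simp; ring

lemma gauss_integrable (b : ℝ) (hb : 0 < b) :
    Integrable (fun v : E => rexp (-b * ‖v‖^2)) := by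
  have h := (GaussianFourier.integrable_cexp_neg_mul_sq_norm_add (V := E)
    (b := (b:ℂ)) (by simpa using hb) 0 0).norm
  simp only [Complex.norm_exp] at h
  convert h using 2 with v
  simp only [zero_mul, add_zero, mul_comm]
  norm_num
  left
  norm_cast

lemma kernel_lq_bound (t q : ℝ) (ht : 1 ≤ t) (hq : 1 ≤ q) :
    (∫⁻ z : E, (ENNReal.ofReal ((2*π*t) ^ (-(d:ℝ)/2) * rexp (-‖z‖^2/(2*t)))) ^ q) ^ (1/q)
      ≤ ENNReal.ofReal (t ^ ((d:ℝ)/(2*q) - (d:ℝ)/2)) := by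
  have ht0 : (0:ℝ) < t := lt_of_lt_of_le one_pos ht
  have hq0 : (0:ℝ) < q := lt_of_lt_of_le one_pos hq
  set c : ℝ := (2*π*t) ^ (-(d:ℝ)/2) with hc_def
  have h2pit : (0:ℝ) < 2*π*t := by positivity
  have hc0 : 0 < c := Real.rpow_pos_of_pos h2pit _
  have hb0 : (0:ℝ) < q/(2*t) := by positivity
  have hpoint : ∀ z : E, (ENNReal.ofReal (c * rexp (-‖z‖^2/(2*t)))) ^ q
      = ENNReal.ofReal (c ^ q * rexp (-(q/(2*t)) * ‖z‖^2)) := by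
    intro z
    rw [ENNReal.ofReal_rpow_of_nonneg (by positivity) hq0.le,
      Real.mul_rpow hc0.le (exp_nonneg _), ← Real.exp_mul]
    congr 2
    ring
  simp_rw [hpoint]
  have hint : Integrable (fun z : E => c ^ q * rexp (-(q/(2*t)) * ‖z‖^2)) :=
    (gauss_integrable _ hb0).const_mul _
  rw [← ofReal_integral_eq_lintegral_ofReal hint
      (Filter.Eventually.of_forall fun z => by positivity)]
  rw [MeasureTheory.integral_const_mul, GaussianFourier.integral_rexp_neg_mul_sq_norm hb0,
    finrank_euclideanSpace_fin]
  rw [ENNReal.ofReal_rpow_of_nonneg (by positivity) (by positivity)]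
  apply ENNReal.ofReal_le_ofReal
  have hB : π / (q/(2*t)) ≤ 2*π*t := by
    rw [div_le_iff₀ hb0]
    have heq : 2*π*t*(q/(2*t)) = π*q := by field_simp
    rw [heq]
    nlinarith [Real.pi_pos]
  have hBpos : (0:ℝ) < π / (q/(2*t)) := by positivity
  calc (c ^ q * (π / (q/(2*t))) ^ ((d:ℝ)/2)) ^ (1/q)
      = c * ((π / (q/(2*t))) ^ ((d:ℝ)/2)) ^ (1/q) := by
        rw [Real.mul_rpow (by positivity) (by positivity)]
        congr 1
        rw [← Real.rpow_mul hc0.le, mul_one_div, div_self (ne_of_gt hq0), Real.rpow_one]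
    _ = c * (π / (q/(2*t))) ^ ((d:ℝ)/(2*q)) := by
        rw [← Real.rpow_mul hBpos.le]
        congr 1
        field_simp
    _ ≤ c * (2*π*t) ^ ((d:ℝ)/(2*q)) := by
        have := Real.rpow_le_rpow hBpos.le hB (by positivity : (0:ℝ) ≤ (d:ℝ)/(2*q))
        exact mul_le_mul_of_nonneg_left this hc0.le
    _ = (2*π*t) ^ (-(d:ℝ)/2 + (d:ℝ)/(2*q)) := by
        rw [Real.rpow_add h2pit]
    _ ≤ t ^ (-(d:ℝ)/2 + (d:ℝ)/(2*q)) := by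
        apply Real.rpow_le_rpow_of_nonpos ht0
        · nlinarith [Real.pi_gt_three]
        · have hd2 : (d:ℝ)/(2*q) ≤ (d:ℝ)/2 := by
            apply div_le_div_of_nonneg_left (Nat.cast_nonneg d) (by norm_num)
            linarith
          linarith
    _ = t ^ ((d:ℝ)/(2*q) - (d:ℝ)/2) := by
        congr 1
        ring

lemma heat_bound (t : ℝ) (ht : 1 ≤ t) {p r : ℝ} (hp1 : 1 < p) (hpr : p < r)
    (f : E → ℝ) (hf : Measurable f) :
    eLpNorm (heatProp d t f) (ENNReal.ofReal r) volume ≤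
      ENNReal.ofReal (t ^ ((d:ℝ)/(2*r) - (d:ℝ)/(2*p))) * eLpNorm f (ENNReal.ofReal p) volume := by
  have ht0 : (0:ℝ) < t := lt_of_lt_of_le one_pos ht
  have hp0 : (0:ℝ) < p := by linarith
  have hr1 : (1:ℝ) < r := hp1.trans hpr
  have hr0 : (0:ℝ) < r := by linarith
  have hp_inv1 : 1/p < 1 := by rw [div_lt_one hp0]; exact hp1
  have hrp_inv : 1/r < 1/p := one_div_lt_one_div_of_lt hp0 hpr
  have hr_inv0 : 0 < 1/r := by positivity
  have hiq_pos : 0 < 1 + 1/r - 1/p := by linarith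
  set q : ℝ := (1 + 1/r - 1/p)⁻¹ with hq_def
  have hq0 : 0 < q := inv_pos.mpr hiq_pos
  have hq_inv : 1/q = 1 + 1/r - 1/p := by rw [hq_def, one_div, inv_inv]
  have hq1 : 1 < q := by
    have h : 1/q < 1 := by rw [hq_inv]; linarith
    rw [div_lt_one hq0] at h; exact h
  have hqr : q < r := by
    refine lt_of_one_div_lt_one_div hr0 ?_
    rw [hq_inv]
    linarith
  have hpqr : 1/p + 1/q = 1 + 1/r := by rw [hq_inv]; ring
  set c : ℝ := (2*π*t) ^ (-(d:ℝ)/2) with hc_def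
  have hc0 : 0 < c := Real.rpow_pos_of_pos (by positivity) _
  set K : E → ℝ≥0∞ := fun z => ENNReal.ofReal (c * rexp (-‖z‖^2/(2*t))) with hK_def
  set F : E → ℝ≥0∞ := fun y => (‖f y‖₊ : ℝ≥0∞) with hF_def
  have hKm : Measurable K := by
    apply Measurable.ennreal_ofReal
    apply Measurable.const_mul
    apply Measurable.exp
    apply Measurable.div_const
    apply Measurable.neg
    exact (measurable_norm.pow_const 2)
  have hFm : Measurable F := hf.nnnorm.coe_nnreal_ennreal
  have hpoint : ∀ x : E, (‖heatProp d t f x‖₊ : ℝ≥0∞) ≤ ∫⁻ y, K (x - y) * F y := by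
    intro x
    show (‖c * ∫ y, rexp (-‖x - y‖^2/(2*t)) * f y‖₊ : ℝ≥0∞) ≤ _
    calc (‖c * ∫ y : E, rexp (-‖x - y‖^2/(2*t)) * f y‖₊ : ℝ≥0∞)
        = ENNReal.ofReal c * (‖∫ y : E, rexp (-‖x - y‖^2/(2*t)) * f y‖₊ : ℝ≥0∞) := by
          rw [nnnorm_mul, ENNReal.coe_mul, ← enorm_eq_nnnorm c, Real.enorm_eq_ofReal hc0.le]
      _ ≤ ENNReal.ofReal c * ∫⁻ y : E, (‖rexp (-‖x - y‖^2/(2*t)) * f y‖₊ : ℝ≥0∞) := by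
          gcongr
          exact enorm_integral_le_lintegral_enorm _
      _ = ∫⁻ y, K (x - y) * F y := by
          rw [← lintegral_const_mul' _ _ ENNReal.ofReal_ne_top]
          refine lintegral_congr fun y => ?_
          rw [nnnorm_mul, ENNReal.coe_mul, ← enorm_eq_nnnorm (rexp _), Real.enorm_eq_ofReal (exp_nonneg _), ← mul_assoc,
            ← ENNReal.ofReal_mul hc0.le]
  have hofr_ne0 : ENNReal.ofReal r ≠ 0 := (ENNReal.ofReal_pos.mpr hr0).ne'
  have hofp_ne0 : ENNReal.ofReal p ≠ 0 := (ENNReal.ofReal_pos.mpr hp0).ne'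
  rw [eLpNorm_eq_lintegral_rpow_enorm_toReal hofr_ne0 ENNReal.ofReal_ne_top,
    eLpNorm_eq_lintegral_rpow_enorm_toReal hofp_ne0 ENNReal.ofReal_ne_top,
    ENNReal.toReal_ofReal hr0.le, ENNReal.toReal_ofReal hp0.le]
  calc (∫⁻ x, (‖heatProp d t f x‖₊ : ℝ≥0∞) ^ r) ^ (1/r)
      ≤ (∫⁻ x, (∫⁻ y, K (x - y) * F y) ^ r) ^ (1/r) := by
        gcongr with x
        exact hpoint x
    _ ≤ (∫⁻ z, K z ^ q) ^ (1/q) * (∫⁻ y, F y ^ p) ^ (1/p) :=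
        young_conv K F hKm hFm p q r hp1 hq1 hr1 hpr hqr hpqr
    _ ≤ ENNReal.ofReal (t ^ ((d:ℝ)/(2*r) - (d:ℝ)/(2*p))) * (∫⁻ y, F y ^ p) ^ (1/p) := by
        gcongr
        have hk := kernel_lq_bound (d := d) t q ht hq1.le
        rw [show (d:ℝ)/(2*q) - (d:ℝ)/2 = (d:ℝ)/(2*r) - (d:ℝ)/(2*p) by
          have h := hq_inv
          have hq_ne : q ≠ 0 := ne_of_gt hq0
          have hp_ne : p ≠ 0 := ne_of_gt hp0
          have hr_ne : r ≠ 0 := ne_of_gt hr0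
          field_simp at h ⊢
          nlinarith [h]] at hk
        exact hk

end Aux

/-- Strichartz parabolic pair of Grand Lebesgue spaces: with
`1 ≤ a₁ < b₁ ≤ a₂ < b₂ ≤ ∞`, `ψ ∈ Ψ(a₁,b₁)`, `ν ∈ Ψ(a₂,b₂)`, one has
`‖T_t f‖_{G(ν)} · φ(G(ψ), t^{d/2}) ≤ C ‖f‖_{G(ψ)} · φ(G(ν), t^{d/2})` for `t > 2`. -/
theorem parabolic_strichartz_GL_pair (d : ℕ) (hd : 1 ≤ d)
    (a₁ b₁ a₂ : ℝ) (b₂ : ℝ≥0∞)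
    (h1 : 1 ≤ a₁) (h2 : a₁ < b₁) (h3 : b₁ ≤ a₂) (h4 : ENNReal.ofReal a₂ < b₂)
    (ψ ν : ℝ → ℝ)
    (hψ_cont : ContinuousOn ψ (Set.Ioo a₁ b₁))
    (hψ_pos : ∀ p ∈ Set.Ioo a₁ b₁, 0 < ψ p)
    (hψ_inf : ∃ ε : ℝ, 0 < ε ∧ ∀ p ∈ Set.Ioo a₁ b₁, ε ≤ ψ p)
    (hν_cont : ContinuousOn ν (glSet a₂ b₂))
    (hν_pos : ∀ r ∈ glSet a₂ b₂, 0 < ν r)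
    (hν_inf : ∃ ε : ℝ, 0 < ε ∧ ∀ r ∈ glSet a₂ b₂, ε ≤ ν r) :
    ∃ C : ℝ, 0 < C ∧ ∀ t : ℝ, 2 < t → ∀ f : EuclideanSpace ℝ (Fin d) → ℝ,
      Measurable f →
      glNorm d (glSet a₂ b₂) ν (heatProp d t f)
          * (⨆ p ∈ Set.Ioo a₁ b₁, ENNReal.ofReal (t ^ ((d : ℝ) / (2 * p)) / ψ p))
        ≤ ENNReal.ofReal C * glNorm d (Set.Ioo a₁ b₁) ψ f
            * ⨆ r ∈ glSet a₂ b₂, ENNReal.ofReal (t ^ ((d : ℝ) / (2 * r)) / ν r) := by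
  refine ⟨1, one_pos, fun t ht f hf => ?_⟩
  have ht0 : (0:ℝ) < t := by linarith
  have ht1 : (1:ℝ) ≤ t := by linarith
  set G : ℝ≥0∞ := glNorm d (Set.Ioo a₁ b₁) ψ f with hG_def
  rw [show glNorm d (glSet a₂ b₂) ν (heatProp d t f)
      = ⨆ r ∈ glSet a₂ b₂, eLpNorm (heatProp d t f) (ENNReal.ofReal r) volume
          / ENNReal.ofReal (ν r) from rfl]
  simp_rw [ENNReal.iSup_mul, ENNReal.mul_iSup]
  refine iSup_le fun r => iSup_le fun hr => iSup_le fun p => iSup_le fun hp => ?_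
  obtain ⟨hpa, hpb⟩ := hp
  have hra : a₂ < r := hr.1
  have hp1 : 1 < p := lt_of_le_of_lt h1 hpa
  have hpr : p < r := lt_of_lt_of_le hpb (le_trans h3 hra.le)
  have hψp : 0 < ψ p := hψ_pos p ⟨hpa, hpb⟩
  have hνr : 0 < ν r := hν_pos r hr
  have hP0 : ENNReal.ofReal (ψ p) ≠ 0 := (ENNReal.ofReal_pos.mpr hψp).ne'
  have hPt : ENNReal.ofReal (ψ p) ≠ ⊤ := ENNReal.ofReal_ne_top
  -- eLpNorm f p ≤ G * ψ p
  have h1' : eLpNorm f (ENNReal.ofReal p) volume ≤ G * ENNReal.ofReal (ψ p) := by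
    have h2' : eLpNorm f (ENNReal.ofReal p) volume / ENNReal.ofReal (ψ p) ≤ G :=
      le_biSup (fun p => eLpNorm f (ENNReal.ofReal p) volume / ENNReal.ofReal (ψ p)) ⟨hpa, hpb⟩
    rwa [ENNReal.div_le_iff hP0 hPt] at h2'
  have hheat := heat_bound t ht1 hp1 hpr f hf
  calc eLpNorm (heatProp d t f) (ENNReal.ofReal r) volume / ENNReal.ofReal (ν r)
        * ENNReal.ofReal (t ^ ((d : ℝ) / (2 * p)) / ψ p)
      ≤ (ENNReal.ofReal (t ^ ((d:ℝ)/(2*r) - (d:ℝ)/(2*p))) * (G * ENNReal.ofReal (ψ p)))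
          / ENNReal.ofReal (ν r) * ENNReal.ofReal (t ^ ((d : ℝ) / (2 * p)) / ψ p) := by
        gcongr
        exact hheat.trans (by gcongr)
    _ = G * ENNReal.ofReal (t ^ ((d : ℝ) / (2 * r)) / ν r) := by
        rw [ENNReal.ofReal_div_of_pos hψp, ENNReal.ofReal_div_of_pos hνr]
        rw [div_eq_mul_inv, div_eq_mul_inv, div_eq_mul_inv]
        have hPP : ENNReal.ofReal (ψ p) * (ENNReal.ofReal (ψ p))⁻¹ = 1 :=
          ENNReal.mul_inv_cancel hP0 hPt
        have hTT : ENNReal.ofReal (t ^ ((d:ℝ)/(2*r) - (d:ℝ)/(2*p)))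
            * ENNReal.ofReal (t ^ ((d:ℝ)/(2*p))) = ENNReal.ofReal (t ^ ((d:ℝ)/(2*r))) := by
          rw [← ENNReal.ofReal_mul (by positivity), ← Real.rpow_add ht0]
          congr 1
          ring
        calc ENNReal.ofReal (t ^ ((d:ℝ)/(2*r) - (d:ℝ)/(2*p))) * (G * ENNReal.ofReal (ψ p))
              * (ENNReal.ofReal (ν r))⁻¹
              * (ENNReal.ofReal (t ^ ((d:ℝ)/(2*p))) * (ENNReal.ofReal (ψ p))⁻¹)
            = (ENNReal.ofReal (ψ p) * (ENNReal.ofReal (ψ p))⁻¹)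
              * (G * ((ENNReal.ofReal (t ^ ((d:ℝ)/(2*r) - (d:ℝ)/(2*p)))
                  * ENNReal.ofReal (t ^ ((d:ℝ)/(2*p)))) * (ENNReal.ofReal (ν r))⁻¹)) := by
              ring
          _ = G * (ENNReal.ofReal (t ^ ((d:ℝ)/(2*r))) * (ENNReal.ofReal (ν r))⁻¹) := by
              rw [hPP, one_mul, hTT]
    _ ≤ ⨆ r' ∈ glSet a₂ b₂, ENNReal.ofReal 1 * G
          * ENNReal.ofReal (t ^ ((d : ℝ) / (2 * r')) / ν r') := by
        refine le_trans ?_ (le_biSup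
          (fun r' => ENNReal.ofReal 1 * G * ENNReal.ofReal (t ^ ((d : ℝ) / (2 * r')) / ν r')) hr)
        rw [ENNReal.ofReal_one, one_mul]
end
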